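/- In ℂ_{0,b;q}[x,y] one has the symmetric normal-ordering expansion (x+y)^n = Σ_{k=0}^n [(q;q)_n/((q;q)_k(q;q)_{n-k})] · [(bq;q)_n/((bq;q)_k(bq;q)_{n-k})] · q^{k(k-n)} y^k x^{n-k}. -/

import Mathlib

/-!
Moving `x` past `y ^ k` produces the scalar `B_k = (bq;q)_{k+2} / ((bq;q)_k (bq;q)_2 q^k)`
(`commFactor`), so expanding `(x + y)^(n+1) = (x + y)(x + y)^n` shows that the coefficient
`c_{k,m}` of `y^k x^m` (`normalOrderCoeff`) obeys the twisted Pascal rule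
`c_{k+1,m+1} = σ(c_{k+1,m}) B_{k+1} + τ(c_{k,m+1})`.
The closed form obeys it because `σ` and `τ` only shift `b` to `bq²` and `bq`: after cancelling
the `q`-shifted factorials the rule becomes, with `U = q^{k+1}` and `V = q^{m+1}`,
`(1 - UV)(1 - bqV) = (1 - bqUV)(1 - V) + (1 - bq)(1 - U)V`.
-/

/-- The `q`-shifted factorial `(a;q)_n = ∏_{j=0}^{n-1} (1 - a q^j)`. -/
def qPoch {K : Type*} [Field K] (a q : K) (n : ℕ) : K :=
  ∏ j ∈ Finset.range n, (1 - a * q ^ j)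

open Finset

section QPochhammer

variable {K : Type*} [Field K]

theorem qPoch_zero (a q : K) : qPoch a q 0 = 1 :=
  prod_range_zero _

theorem qPoch_one (a q : K) : qPoch a q 1 = 1 - a := by
  simp [qPoch]

theorem qPoch_succ (a q : K) (n : ℕ) : qPoch a q (n + 1) = qPoch a q n * (1 - a * q ^ n) :=
  prod_range_succ _ _

theorem qPoch_add (a q : K) (m n : ℕ) :
    qPoch a q (m + n) = qPoch a q m * qPoch (a * q ^ m) q n := by
  simp only [qPoch, prod_range_add, pow_add, mul_assoc]

theorem map_qPoch {L : Type*} [Field L] (f : K →+* L) (a q : K) (n : ℕ) :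
    f (qPoch a q n) = qPoch (f a) (f q) n := by
  simp [qPoch, map_prod]

theorem qPoch_ne_zero {a q : K} (h : ∀ j : ℕ, 1 - a * q ^ j ≠ 0) (n : ℕ) :
    qPoch a q n ≠ 0 :=
  prod_ne_zero_iff.mpr fun j _ => h j

theorem qPoch_mul_pow_eq_div {a q : K} (h : ∀ j : ℕ, 1 - a * q ^ j ≠ 0) (m n : ℕ) :
    qPoch (a * q ^ m) q n = qPoch a q (n + m) / qPoch a q m := by
  rw [add_comm, qPoch_add, mul_div_cancel_left₀ _ (qPoch_ne_zero h m)]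

theorem qPoch_mul_eq_div {a q : K} (h : ∀ j : ℕ, 1 - a * q ^ j ≠ 0) (n : ℕ) :
    qPoch (a * q) q n = qPoch a q (n + 1) / (1 - a) := by
  simpa [qPoch_one] using qPoch_mul_pow_eq_div h 1 n

end QPochhammer

theorem Finset.Nat.sum_antidiagonal_succ_of_pascal {M : Type*} [AddCommMonoid M]
    (F G H : ℕ → ℕ → M) (h_left : ∀ m, F 0 (m + 1) = G 0 m)
    (h_right : ∀ k, F (k + 1) 0 = H k 0)
    (h_pascal : ∀ k m, F (k + 1) (m + 1) = G (k + 1) m + H k (m + 1)) (n : ℕ) :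
    ∑ p ∈ antidiagonal (n + 1), F p.1 p.2 =
      ∑ p ∈ antidiagonal n, G p.1 p.2 + ∑ p ∈ antidiagonal n, H p.1 p.2 := by
  rcases n with _ | n
  · simp [Nat.sum_antidiagonal_succ, h_left, h_right]
  · rw [Nat.sum_antidiagonal_succ, Nat.sum_antidiagonal_succ (f := fun p => G p.1 p.2),
      Nat.sum_antidiagonal_succ' (f := fun p => F (p.1 + 1) p.2),
      Nat.sum_antidiagonal_succ' (f := fun p => H p.1 p.2)]
    simp only [h_left, h_right, h_pascal, sum_add_distrib]
    abel

section SkewBinomial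

variable {K R : Type*} [Semiring K] [Semiring R] (ι : K →+* R) (σ τ : K →+* K) {x y : R}

theorem mul_pow_eq_of_mul_eq (hy : ∀ f, y * ι f = ι (τ f) * y) {β : K}
    (hxy : x * y = ι β * (y * x)) {B : ℕ → K} (hB_zero : B 0 = 1)
    (hB_succ : ∀ k, B (k + 1) = β * τ (B k)) (k : ℕ) :
    x * y ^ k = ι (B k) * (y ^ k * x) := by
  induction k with
  | zero => simp [hB_zero]
  | succ k ih =>
    calc x * y ^ (k + 1) = ι β * (y * ι (B k)) * (y ^ k * x) := by
          rw [pow_succ', ← mul_assoc, hxy, mul_assoc, mul_assoc, ih]; noncomm_ring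
      _ = ι (B (k + 1)) * (y ^ (k + 1) * x) := by
          rw [hy, hB_succ, map_mul, pow_succ']; noncomm_ring

theorem add_pow_eq_sum_antidiagonal_of_pascal (hx : ∀ f, x * ι f = ι (σ f) * x)
    (hy : ∀ f, y * ι f = ι (τ f) * y) {B : ℕ → K}
    (hxy : ∀ k, x * y ^ k = ι (B k) * (y ^ k * x))
    {c : ℕ → ℕ → K} (h_zero : c 0 0 = 1) (h_left : ∀ m, c 0 (m + 1) = σ (c 0 m) * B 0)
    (h_right : ∀ k, c (k + 1) 0 = τ (c k 0))
    (h_pascal : ∀ k m, c (k + 1) (m + 1) = σ (c (k + 1) m) * B (k + 1) + τ (c k (m + 1)))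
    (n : ℕ) : (x + y) ^ n = ∑ p ∈ antidiagonal n, ι (c p.1 p.2) * y ^ p.1 * x ^ p.2 := by
  induction n with
  | zero => simp [h_zero]
  | succ n ih =>
    have hx_term : ∀ k m, x * (ι (c k m) * y ^ k * x ^ m) =
        ι (σ (c k m) * B k) * y ^ k * x ^ (m + 1) := fun k m => by
      rw [← mul_assoc, ← mul_assoc, hx, mul_assoc _ x, hxy, map_mul, pow_succ']; noncomm_ring
    have hy_term : ∀ k m, y * (ι (c k m) * y ^ k * x ^ m) =
        ι (τ (c k m)) * y ^ (k + 1) * x ^ m := fun k m => by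
      rw [← mul_assoc, ← mul_assoc, hy, pow_succ']; noncomm_ring
    rw [pow_succ', ih, add_mul, mul_sum, mul_sum]
    simp only [hx_term, hy_term]
    refine (Nat.sum_antidiagonal_succ_of_pascal (fun k m => ι (c k m) * y ^ k * x ^ m)
      (fun k m => ι (σ (c k m) * B k) * y ^ k * x ^ (m + 1))
      (fun k m => ι (τ (c k m)) * y ^ (k + 1) * x ^ m)
      (fun m => ?_) (fun k => ?_) (fun k m => ?_) n).symm
    · rw [h_left]
    · rw [h_right]
    · rw [h_pascal, map_add, add_mul, add_mul]

end SkewBinomial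

section Coefficients

variable {K : Type*} [Field K]

def normalOrderCoeff (b q : K) (k m : ℕ) : K :=
  qPoch q q (k + m) / (qPoch q q k * qPoch q q m) *
    (qPoch (b * q) q (k + m) / (qPoch (b * q) q k * qPoch (b * q) q m)) / q ^ (k * m)

def commFactor (b q : K) (k : ℕ) : K :=
  qPoch (b * q) q (k + 2) / (qPoch (b * q) q k * qPoch (b * q) q 2 * q ^ k)

theorem map_normalOrderCoeff (f : K →+* K) {q : K} (hf : f q = q) (b : K) (k m : ℕ) :
    f (normalOrderCoeff b q k m) = normalOrderCoeff (f b) q k m := by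
  simp [normalOrderCoeff, map_qPoch, hf]

theorem map_commFactor (f : K →+* K) {q : K} (hf : f q = q) (b : K) (k : ℕ) :
    f (commFactor b q k) = commFactor (f b) q k := by
  simp [commFactor, map_qPoch, hf]

variable {b q : K}

theorem normalOrderCoeff_zero_left (hq : ∀ j : ℕ, 1 - q * q ^ j ≠ 0)
    (hb : ∀ j : ℕ, 1 - b * q * q ^ j ≠ 0) (m : ℕ) : normalOrderCoeff b q 0 m = 1 := by
  simp [normalOrderCoeff, qPoch_zero, qPoch_ne_zero hq, qPoch_ne_zero hb]

theorem normalOrderCoeff_zero_right (hq : ∀ j : ℕ, 1 - q * q ^ j ≠ 0)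
    (hb : ∀ j : ℕ, 1 - b * q * q ^ j ≠ 0) (k : ℕ) : normalOrderCoeff b q k 0 = 1 := by
  simp [normalOrderCoeff, qPoch_zero, qPoch_ne_zero hq, qPoch_ne_zero hb]

theorem commFactor_zero (hb : ∀ j : ℕ, 1 - b * q * q ^ j ≠ 0) : commFactor b q 0 = 1 := by
  simp [commFactor, qPoch_zero, qPoch_ne_zero hb]

theorem commFactor_succ (hq0 : q ≠ 0) (hb : ∀ j : ℕ, 1 - b * q * q ^ j ≠ 0) (k : ℕ) :
    commFactor b q (k + 1) = (q * (1 - b * q) / (1 - b * q ^ 3))⁻¹ * commFactor (b * q) q k := by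
  have hb1 : 1 - b * q ≠ 0 := by simpa using hb 0
  have hb3 : 1 - b * q ^ 3 ≠ 0 := by simpa [pow_succ, mul_assoc] using hb 2
  simp only [commFactor, qPoch_mul_eq_div hb]
  rw [show k + 2 + 1 = k + 1 + 2 by ring, qPoch_succ _ _ 2]
  have := qPoch_ne_zero hb (k + 1); have := qPoch_ne_zero hb (k + 1 + 2)
  have := qPoch_ne_zero hb 2; have := pow_ne_zero k hq0
  field_simp
  ring

theorem normalOrderCoeff_succ_succ (hq0 : q ≠ 0) (hq : ∀ j : ℕ, 1 - q * q ^ j ≠ 0)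
    (hb : ∀ j : ℕ, 1 - b * q * q ^ j ≠ 0) (k m : ℕ) :
    normalOrderCoeff b q (k + 1) (m + 1) =
      normalOrderCoeff (b * q ^ 2) q (k + 1) m * commFactor b q (k + 1) +
        normalOrderCoeff (b * q) q k (m + 1) := by
  have h_linear : (1 - q * q ^ (k + m + 1)) * (1 - b * q * q ^ (m + 1)) =
      (1 - b * q * q ^ (k + m + 1 + 1)) * (1 - q * q ^ m) +
        (1 - b * q) * (1 - q * q ^ k) * (q ^ m * q) := by
    ring
  have h_shift : ∀ n,
      qPoch (b * q ^ 2 * q) q n = qPoch (b * q) q (n + 2) / qPoch (b * q) q 2 := by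
    simpa [mul_right_comm b] using qPoch_mul_pow_eq_div hb 2
  simp only [normalOrderCoeff, commFactor, qPoch_mul_eq_div hb, h_shift]
  rw [show k + 1 + (m + 1) = k + m + 1 + 1 by ring, show k + 1 + m = k + m + 1 by ring,
    show k + (m + 1) = k + m + 1 by ring, show k + m + 1 + 2 = k + m + 1 + 1 + 1 by ring,
    show m + 2 = m + 1 + 1 by ring]
  rw [qPoch_succ q q k, qPoch_succ q q m, qPoch_succ q q (k + m + 1),
    qPoch_succ (b * q) q (m + 1), qPoch_succ (b * q) q (k + m + 1 + 1)]
  have := qPoch_ne_zero hq k; have := qPoch_ne_zero hq m; have := qPoch_ne_zero hq (k + m + 1)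
  have := qPoch_ne_zero hb (k + 1); have := qPoch_ne_zero hb (m + 1)
  have := qPoch_ne_zero hb (k + m + 1 + 1); have := qPoch_ne_zero hb (k + 1 + 2)
  have := qPoch_ne_zero hb 2
  have := hq k; have := hq m; have := hb (m + 1)
  have : 1 - b * q ≠ 0 := by simpa using hb 0
  -- the linear factors become opaque, so that `field_simp` cancels them without expanding
  generalize 1 - q * q ^ (k + m + 1) = a₁ at *
  generalize 1 - b * q * q ^ (k + m + 1 + 1) = a₂ at *
  generalize 1 - b * q * q ^ (m + 1) = a₃ at *
  generalize 1 - q * q ^ m = a₄ at *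
  generalize 1 - q * q ^ k = a₅ at *
  generalize 1 - b * q = a₆ at *
  rw [show q ^ ((k + 1) * (m + 1)) = q ^ (k * m) * q ^ k * q ^ m * q by ring,
    show q ^ ((k + 1) * m) = q ^ (k * m) * q ^ m by ring,
    show q ^ (k * (m + 1)) = q ^ (k * m) * q ^ k by ring, pow_succ q k]
  have := pow_ne_zero k hq0; have := pow_ne_zero m hq0; have := pow_ne_zero (k * m) hq0
  field_simp
  linear_combination h_linear

theorem normalOrderCoeff_eq {n k : ℕ} (hk : k ≤ n) :
    normalOrderCoeff b q k (n - k) =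
      qPoch q q n / (qPoch q q k * qPoch q q (n - k)) *
        (qPoch (b * q) q n / (qPoch (b * q) q k * qPoch (b * q) q (n - k))) *
          q ^ ((k : ℤ) * ((k : ℤ) - (n : ℤ))) := by
  obtain ⟨m, rfl⟩ := Nat.exists_eq_add_of_le hk
  rw [Nat.add_sub_cancel_left, normalOrderCoeff, div_eq_mul_inv _ (q ^ (k * m)),
    show (k : ℤ) * (k - (k + m : ℕ)) = -((k * m : ℕ) : ℤ) by push_cast; ring,
    zpow_neg, zpow_natCast]

end Coefficients

/-- In `ℂ_{0,b;q}[x,y]` the symmetric normal-ordering expansion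
`(x+y)^n = ∑_{k=0}^n [(q;q)_n/((q;q)_k(q;q)_{n-k})]·[(bq;q)_n/((bq;q)_k(bq;q)_{n-k})]·
q^{k(k-n)} y^k x^{n-k}` holds. -/
theorem stmt9 {K R : Type*} [Field K] [Ring R] (b q : K) (ι : K →+* R) (x y : R)
    (σ τ : K →+* K)
    (hσb : σ b = b * q ^ 2) (hσq : σ q = q)
    (hτb : τ b = b * q) (hτq : τ q = q)
    (hx : ∀ f : K, x * ι f = ι (σ f) * x)
    (hy : ∀ f : K, y * ι f = ι (τ f) * y)
    (hq0 : q ≠ 0) (hq1 : ∀ m : ℕ, q ^ (m + 1) ≠ 1)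
    (hbq : ∀ m : ℤ, 1 - b * q ^ m ≠ 0)
    (hyx : y * x = ι (q * (1 - b * q) / (1 - b * q ^ 3)) * (x * y))
    (n : ℕ) :
    (x + y) ^ n = ∑ k ∈ Finset.range (n + 1),
      ι (qPoch q q n / (qPoch q q k * qPoch q q (n - k)) *
          (qPoch (b * q) q n / (qPoch (b * q) q k * qPoch (b * q) q (n - k))) *
          q ^ ((k : ℤ) * ((k : ℤ) - (n : ℤ)))) *
        y ^ k * x ^ (n - k) := by
  have hq : ∀ j : ℕ, 1 - q * q ^ j ≠ 0 := fun j => by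
    rw [← pow_succ']; exact sub_ne_zero.mpr (hq1 j).symm
  have hb : ∀ j : ℕ, 1 - b * q * q ^ j ≠ 0 := fun j => by
    rw [mul_assoc, ← pow_succ', ← zpow_natCast]; exact hbq _
  have hα : q * (1 - b * q) / (1 - b * q ^ 3) ≠ 0 :=
    div_ne_zero (mul_ne_zero hq0 (by simpa using hbq 1)) (by simpa using hbq 3)
  have hxy : x * y = ι (q * (1 - b * q) / (1 - b * q ^ 3))⁻¹ * (y * x) := by
    rw [hyx, ← mul_assoc, ← map_mul, inv_mul_cancel₀ hα, map_one, one_mul]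
  have hcomm := mul_pow_eq_of_mul_eq ι τ hy hxy (commFactor_zero hb) fun k => by
    rw [map_commFactor τ hτq, hτb, commFactor_succ hq0 hb]
  have h_pascal : ∀ k m, normalOrderCoeff b q (k + 1) (m + 1) =
      σ (normalOrderCoeff b q (k + 1) m) * commFactor b q (k + 1) +
        τ (normalOrderCoeff b q k (m + 1)) := fun k m => by
    rw [map_normalOrderCoeff σ hσq, map_normalOrderCoeff τ hτq, hσb, hτb,
      normalOrderCoeff_succ_succ hq0 hq hb]
  rw [add_pow_eq_sum_antidiagonal_of_pascal ι σ τ hx hy hcomm (c := normalOrderCoeff b q)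
      (normalOrderCoeff_zero_left hq hb 0)
      (fun m => by simp [normalOrderCoeff_zero_left hq hb, commFactor_zero hb])
      (fun k => by simp [normalOrderCoeff_zero_right hq hb]) h_pascal n,
    Nat.sum_antidiagonal_eq_sum_range_succ
      (fun k m => ι (normalOrderCoeff b q k m) * y ^ k * x ^ m)]
  exact sum_congr rfl fun k hk => by
    rw [normalOrderCoeff_eq (Nat.lt_succ_iff.mp (mem_range.mp hk))]
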